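/- Let S be a set of N > d points of ℝ^d in general position and let n ≥ 2. The number of distinct labelings in {1,...,n}^N of S realizable by multi-class linear classifiers h(x) = argmax_{k ∈ {1,...,n}} (h_kᵀx + b_k) is at most [2^{d+1} · C(N, d)]^{n(n-1)/2}. -/

import Mathlib

/-!
For each pair of classes `a < b`, record which points score at least as high for `a` as for `b`.
Since ties go to the smaller index, these `n(n-1)/2` binary labelings determine the argmax
labeling, and each of them is cut out by a closed halfspace, i.e. it is the pattern of signs
`0 ≤ φᵢ(w)` of the functionals `φᵢ(h, b) = ⟪h, xᵢ⟫ + b` on `ℝ^(d+1)`. Raising the offset `b`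
slightly makes all these signs strict, and by Cover's deletion–restriction recursion (split along
the last hyperplane and restrict to it) `N` linear functionals on a space of dimension `d + 1` have
at most `2 ∑_{j ≤ d} C(N-1, j) ≤ 2^(d+1) C(N, d)` strict sign patterns.
-/

open Finset Filter Topology Module

lemma ncard_eq_ncard_image_init_add_ncard {M : ℕ} (P : Set (Fin (M + 1) → Bool)) :
    P.ncard = (Fin.init '' P).ncard +
      {τ : Fin M → Bool | Fin.snoc τ true ∈ P ∧ Fin.snoc τ false ∈ P}.ncard := by
  set A := {τ : Fin M → Bool | Fin.snoc τ true ∈ P}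
  set B := {τ : Fin M → Bool | Fin.snoc τ false ∈ P}
  have hsnoc : ∀ b : Bool,
      P ∩ {σ | σ (Fin.last M) = b} = (Fin.snoc · b) '' {τ | Fin.snoc τ b ∈ P} := by
    intro b
    ext σ
    constructor
    · rintro ⟨hσ, rfl⟩
      exact ⟨Fin.init σ, by simpa [Fin.snoc_init_self] using hσ, Fin.snoc_init_self σ⟩
    · rintro ⟨τ, hτ, rfl⟩
      exact ⟨hτ, Fin.snoc_last _ _⟩
  have hinj : ∀ b : Bool,
      Function.Injective (Fin.snoc · b : (Fin M → Bool) → Fin (M + 1) → Bool) :=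
    fun b _ _ h => (Fin.snoc_injective2 h).1
  have hunion : A ∪ B = Fin.init '' P := by
    ext τ
    constructor
    · rintro (h | h) <;> exact ⟨_, h, Fin.init_snoc _ _⟩
    · rintro ⟨σ, hσ, rfl⟩
      have hσ' : Fin.snoc (Fin.init σ) (σ (Fin.last M)) ∈ P := by rwa [Fin.snoc_init_self]
      cases h : σ (Fin.last M) <;> rw [h] at hσ'
      exacts [Or.inr hσ', Or.inl hσ']
  calc P.ncard = (P ∩ {σ | σ (Fin.last M) = true}).ncard +
        (P ∩ {σ | σ (Fin.last M) = false}).ncard := by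
        rw [← Set.ncard_inter_add_ncard_sdiff_eq_ncard P {σ | σ (Fin.last M) = true}]
        congr 2
        ext σ
        simp
    _ = A.ncard + B.ncard := by
        rw [hsnoc, hsnoc, Set.ncard_image_of_injective _ (hinj _),
          Set.ncard_image_of_injective _ (hinj _)]
    _ = (A ∪ B).ncard + (A ∩ B).ncard := (Set.ncard_union_add_ncard_inter _ _).symm
    _ = _ := by rw [hunion]; rfl

lemma mul_add_mul_ne_zero_and_pos_iff {a b x y : ℝ} (ha : 0 < a) (hb : 0 < b) (hx : x ≠ 0)
    (hy : y ≠ 0) (hxy : 0 < x ↔ 0 < y) : a * x + b * y ≠ 0 ∧ (0 < a * x + b * y ↔ 0 < x) := by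
  rcases hx.lt_or_gt with hx | hx
  · have hy : y < 0 := lt_of_le_of_ne (not_lt.1 fun h => hx.not_gt (hxy.2 h)) hy
    have : a * x + b * y < 0 := by nlinarith
    exact ⟨this.ne, iff_of_false this.not_gt hx.not_gt⟩
  · have : 0 < a * x + b * y := by nlinarith [hxy.1 hx]
    exact ⟨this.ne', iff_of_true this hx⟩

noncomputable section SignPatterns

variable {W : Type*} [AddCommGroup W] [Module ℝ W] {ι : Type*}

def signPattern (ψ : ι → Dual ℝ W) (w : W) : ι → Bool := fun i => decide (0 < ψ i w)

def strictSignPatterns (ψ : ι → Dual ℝ W) : Set (ι → Bool) :=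
  signPattern ψ '' {w | ∀ i, ψ i w ≠ 0}

def closedSignPatterns (ψ : ι → Dual ℝ W) : Set (ι → Bool) :=
  Set.range fun w i => decide (0 ≤ ψ i w)

lemma strictSignPatterns_eq_empty_of_eq_zero {ψ : ι → Dual ℝ W} (i : ι) (hi : ψ i = 0) :
    strictSignPatterns ψ = ∅ :=
  Set.eq_empty_of_forall_notMem fun _ ⟨_, hw, _⟩ => hw i (by simp [hi])

lemma strictSignPatterns_eq_empty_of_finrank_eq_zero [FiniteDimensional ℝ W] [Nonempty ι]
    (ψ : ι → Dual ℝ W) (hW : finrank ℝ W = 0) : strictSignPatterns ψ = ∅ :=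
  strictSignPatterns_eq_empty_of_eq_zero (Classical.arbitrary ι) <|
    LinearMap.ext fun w => by simp [finrank_zero_iff_forall_zero.1 hW w]

lemma image_init_strictSignPatterns_subset {M : ℕ} (ψ : Fin (M + 1) → Dual ℝ W) :
    Fin.init '' strictSignPatterns ψ ⊆ strictSignPatterns fun i => ψ i.castSucc := by
  rintro _ ⟨_, ⟨w, hw, rfl⟩, rfl⟩
  exact ⟨w, fun i => hw _, rfl⟩

lemma setOf_snoc_mem_strictSignPatterns_subset {M : ℕ} (ψ : Fin (M + 1) → Dual ℝ W) :
    {τ | Fin.snoc τ true ∈ strictSignPatterns ψ ∧ Fin.snoc τ false ∈ strictSignPatterns ψ} ⊆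
      strictSignPatterns fun i => (ψ i.castSucc).comp (LinearMap.ker (ψ (Fin.last M))).subtype := by
  rintro τ ⟨⟨w, hw0, hw⟩, ⟨w', hw0', hw'⟩⟩
  set L := ψ (Fin.last M)
  have hL : 0 < L w := by simpa [signPattern] using congrFun hw (Fin.last M)
  have hL' : L w' < 0 :=
    lt_of_le_of_ne (by simpa [signPattern] using congrFun hw' (Fin.last M)) (hw0' _)
  -- the segment from `w'` to `w` crosses `ker L` inside the cone of `τ`
  have hv : (-L w') • w + L w • w' ∈ LinearMap.ker L := by
    simp only [LinearMap.mem_ker, map_add, map_smul, smul_eq_mul]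
    ring
  have hτ : ∀ i : Fin M, decide (0 < ψ i.castSucc w) = τ i := fun i => by
    simpa [signPattern] using congrFun hw i.castSucc
  have hτ' : ∀ i : Fin M, decide (0 < ψ i.castSucc w') = τ i := fun i => by
    simpa [signPattern] using congrFun hw' i.castSucc
  have hsign (i : Fin M) := mul_add_mul_ne_zero_and_pos_iff (neg_pos.2 hL') hL (hw0 i.castSucc)
    (hw0' i.castSucc) (decide_eq_decide.1 ((hτ i).trans (hτ' i).symm))
  refine ⟨⟨_, hv⟩, fun i => by simpa using (hsign i).1, funext fun i => ?_⟩
  simp only [signPattern, LinearMap.comp_apply, Submodule.subtype_apply, map_add, map_smul,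
    smul_eq_mul]
  rw [decide_eq_decide.2 (hsign i).2, hτ i]

lemma sum_range_choose_succ_eq (M D : ℕ) :
    ∑ j ∈ range (D + 1), (M + 1).choose j =
      ∑ j ∈ range (D + 1), M.choose j + ∑ j ∈ range D, M.choose j := by
  induction D with
  | zero => simp
  | succ D ih =>
    rw [sum_range_succ, ih, sum_range_succ _ (D + 1), sum_range_succ _ D, Nat.choose_succ_succ']
    ring

theorem ncard_strictSignPatterns_le (M D : ℕ) [FiniteDimensional ℝ W]
    (ψ : Fin (M + 1) → Dual ℝ W) (hW : finrank ℝ W ≤ D) :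
    (strictSignPatterns ψ).ncard ≤ 2 * ∑ j ∈ range D, M.choose j := by
  induction M generalizing D W with
  | zero =>
    obtain _ | D := D
    · simp [strictSignPatterns_eq_empty_of_finrank_eq_zero ψ (by omega)]
    refine (Set.ncard_le_card _).trans ?_
    simp [sum_range_succ']
  | succ M ih =>
    obtain _ | D := D
    · simp [strictSignPatterns_eq_empty_of_finrank_eq_zero ψ (by omega)]
    have hinit := (Set.ncard_le_ncard (image_init_strictSignPatterns_subset ψ)).trans
      (ih (D + 1) _ hW)
    have hker : {τ | Fin.snoc τ true ∈ strictSignPatterns ψ ∧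
        Fin.snoc τ false ∈ strictSignPatterns ψ}.ncard ≤ 2 * ∑ j ∈ range D, M.choose j := by
      by_cases hL : ψ (Fin.last (M + 1)) = 0
      · simp [strictSignPatterns_eq_empty_of_eq_zero _ hL]
      refine (Set.ncard_le_ncard (setOf_snoc_mem_strictSignPatterns_subset ψ)).trans (ih D _ ?_)
      have := Submodule.finrank_lt (mt LinearMap.ker_eq_top.1 hL)
      omega
    rw [ncard_eq_ncard_image_init_add_ncard, sum_range_choose_succ_eq, mul_add]
    exact add_le_add hinit hker

end SignPatterns

lemma exists_forall_add_ne_zero_and_pos_iff {ι : Type*} [Finite ι] (a : ι → ℝ) :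
    ∃ ε : ℝ, ∀ i, a i + ε ≠ 0 ∧ (0 < a i + ε ↔ 0 ≤ a i) := by
  have h (i : ι) : ∀ᶠ ε in 𝓝[>] (0 : ℝ), a i + ε ≠ 0 ∧ (0 < a i + ε ↔ 0 ≤ a i) := by
    rcases le_or_gt 0 (a i) with ha | ha
    · filter_upwards [self_mem_nhdsWithin] with ε (hε : 0 < ε)
      have : 0 < a i + ε := by positivity
      exact ⟨this.ne', iff_of_true this ha⟩
    · filter_upwards [nhdsWithin_le_nhds (eventually_lt_nhds (neg_pos.2 ha))] with ε hε
      have : a i + ε < 0 := by linarith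
      exact ⟨this.ne, iff_of_false this.not_gt ha.not_ge⟩
  exact (eventually_all.2 h).exists

lemma closedSignPatterns_subset_strictSignPatterns {W ι : Type*} [AddCommGroup W] [Module ℝ W]
    [Finite ι] (ψ : ι → Dual ℝ W) (u : W) (hu : ∀ i, ψ i u = 1) :
    closedSignPatterns ψ ⊆ strictSignPatterns ψ := by
  rintro _ ⟨w, rfl⟩
  obtain ⟨ε, hε⟩ := exists_forall_add_ne_zero_and_pos_iff fun i => ψ i w
  have hval (i : ι) : ψ i (w + ε • u) = ψ i w + ε := by simp [hu]
  exact ⟨w + ε • u, fun i => hval i ▸ (hε i).1,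
    funext fun i => by simp only [signPattern, hval, (hε i).2]⟩

noncomputable def affineEval {d : ℕ} (v : Fin d → ℝ) : Dual ℝ ((Fin d → ℝ) × ℝ) where
  toFun w := ∑ j, w.1 j * v j + w.2
  map_add' w w' := by
    simp only [Prod.fst_add, Prod.snd_add, Pi.add_apply, add_mul, sum_add_distrib]
    ring
  map_smul' c w := by
    simp only [Prod.smul_fst, Prod.smul_snd, Pi.smul_apply, smul_eq_mul, RingHom.id_apply,
      mul_add, mul_sum, mul_assoc]

@[simp]
lemma affineEval_apply {d : ℕ} (v : Fin d → ℝ) (w : (Fin d → ℝ) × ℝ) :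
    affineEval v w = ∑ j, w.1 j * v j + w.2 := rfl

lemma ncard_closedSignPatterns_affineEval_le {d N : ℕ} (x : Fin (N + 1) → Fin d → ℝ) :
    (closedSignPatterns fun i => affineEval (x i)).ncard ≤
      2 * ∑ j ∈ range (d + 1), N.choose j :=
  (Set.ncard_le_ncard (closedSignPatterns_subset_strictSignPatterns _ (0, 1) (by simp))).trans
    (ncard_strictSignPatterns_le N (d + 1) _ (by simp))

lemma choose_le_choose_mul_choose {n d j : ℕ} (hjd : j ≤ d) (hdn : d ≤ n) :
    n.choose j ≤ d.choose j * n.choose d :=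
  calc n.choose j ≤ n.choose j * (n - j).choose (d - j) :=
        Nat.le_mul_of_pos_right _ (Nat.choose_pos (by omega))
    _ = d.choose j * n.choose d := by rw [← Nat.choose_mul hjd, mul_comm]

lemma sum_range_choose_le_two_pow_mul_choose {n d : ℕ} (hd : d ≤ n + 1) :
    ∑ j ∈ range (d + 1), n.choose j ≤ 2 ^ d * (n + 1).choose d :=
  calc ∑ j ∈ range (d + 1), n.choose j ≤ ∑ j ∈ range (d + 1), d.choose j * (n + 1).choose d :=
        sum_le_sum fun j hj => (Nat.choose_le_choose j n.le_succ).trans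
          (choose_le_choose_mul_choose (Nat.lt_succ_iff.1 (mem_range.1 hj)) hd)
    _ = 2 ^ d * (n + 1).choose d := by rw [← sum_mul, Nat.sum_range_choose]

section Argmax

variable {ι α : Type*} [LinearOrder ι] [LinearOrder α] {s t : ι → α} {k k' : ι}

lemma le_of_isLeast_maximizers (hst : ∀ a b, a < b → (s b ≤ s a ↔ t b ≤ t a))
    (hk : IsLeast {l | ∀ m, s m ≤ s l} k) (hk' : IsLeast {l | ∀ m, t m ≤ t l} k') : k ≤ k' := by
  refine hk.2 fun l => ?_
  rcases lt_trichotomy l k' with hl | rfl | hl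
  · have : ¬ t k' ≤ t l := fun h => hl.not_ge (hk'.2 fun m => (hk'.1 m).trans h)
    exact (not_le.1 (mt (hst l k' hl).1 this)).le
  · exact le_rfl
  · exact (hst k' l hl).2 (hk'.1 l)

lemma eq_of_isLeast_maximizers (hst : ∀ a b, a < b → (s b ≤ s a ↔ t b ≤ t a))
    (hk : IsLeast {l | ∀ m, s m ≤ s l} k) (hk' : IsLeast {l | ∀ m, t m ≤ t l} k') : k = k' :=
  le_antisymm (le_of_isLeast_maximizers hst hk hk')
    (le_of_isLeast_maximizers (fun a b h => (hst a b h).symm) hk' hk)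

end Argmax

lemma ncard_univ_pi_const {κ β : Type*} [Fintype κ] (C : Set β) :
    (Set.univ.pi fun _ : κ => C).ncard = C.ncard ^ Fintype.card κ := by
  rw [← Nat.card_coe_set_eq, Nat.card_congr (Equiv.Set.univPi _), Nat.card_pi,
    prod_const, Nat.card_coe_set_eq, card_univ]

lemma card_pairs_lt (n : ℕ) :
    Fintype.card {p : Fin n × Fin n // p.1 < p.2} = n * (n - 1) / 2 := by
  rw [Fintype.card_subtype, Fintype.card_product_filter_lt, Fintype.card_fin,
    Nat.choose_two_right]

section Classifiers

variable {d N : ℕ} (x : Fin N → Fin d → ℝ)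

def linearClassifierLabelings (n : ℕ) : Set (Fin N → Fin n) :=
  {q | ∃ (H : Fin n → Fin d → ℝ) (B : Fin n → ℝ), ∀ i,
    IsLeast {k | ∀ l, affineEval (x i) (H l, B l) ≤ affineEval (x i) (H k, B k)} (q i)}

noncomputable def pairLabeling {n : ℕ} (H : Fin n → Fin d → ℝ) (B : Fin n → ℝ)
    (p : {p : Fin n × Fin n // p.1 < p.2}) : Fin N → Bool :=
  fun i => decide (affineEval (x i) (H p.1.2, B p.1.2) ≤ affineEval (x i) (H p.1.1, B p.1.1))

lemma pairLabeling_mem_closedSignPatterns {n : ℕ} (H : Fin n → Fin d → ℝ) (B : Fin n → ℝ)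
    (p : {p : Fin n × Fin n // p.1 < p.2}) :
    pairLabeling x H B p ∈ closedSignPatterns fun i => affineEval (x i) :=
  ⟨(H p.1.1 - H p.1.2, B p.1.1 - B p.1.2), funext fun i => by
    simp only [pairLabeling, ← Prod.mk_sub_mk, map_sub, sub_nonneg]⟩

lemma eq_of_pairLabeling_eq {n : ℕ} {H H' : Fin n → Fin d → ℝ} {B B' : Fin n → ℝ}
    {q q' : Fin N → Fin n}
    (hq : ∀ i, IsLeast {k | ∀ l, affineEval (x i) (H l, B l) ≤ affineEval (x i) (H k, B k)} (q i))
    (hq' : ∀ i,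
      IsLeast {k | ∀ l, affineEval (x i) (H' l, B' l) ≤ affineEval (x i) (H' k, B' k)} (q' i))
    (h : pairLabeling x H B = pairLabeling x H' B') : q = q' := by
  refine funext fun i => eq_of_isLeast_maximizers (fun a b hab => ?_) (hq i) (hq' i)
  exact decide_eq_decide.1 (congrFun (congrFun h ⟨(a, b), hab⟩) i)

theorem ncard_linearClassifierLabelings_le (n : ℕ) :
    (linearClassifierLabelings x n).ncard ≤
      (closedSignPatterns fun i => affineEval (x i)).ncard ^ (n * (n - 1) / 2) := by
  choose! H B hHB using fun q (hq : q ∈ linearClassifierLabelings x n) => hq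
  rw [← card_pairs_lt, ← ncard_univ_pi_const]
  exact Set.ncard_le_ncard_of_injOn (fun q => pairLabeling x (H q) (B q))
    (fun q _ p _ => pairLabeling_mem_closedSignPatterns x _ _ p)
    (fun q hq q' hq' h => eq_of_pairLabeling_eq x (hHB q hq) (hHB q' hq') h)

end Classifiers

theorem stmt6_general (d N n : ℕ) (hdN : d < N)
    (x : Fin N → (Fin d → ℝ)) :
    Set.ncard {q : Fin N → Fin n | ∃ (H : Fin n → Fin d → ℝ) (B : Fin n → ℝ),
        ∀ i, (∀ k, (∑ j, H k j * x i j) + B k ≤ (∑ j, H (q i) j * x i j) + B (q i)) ∧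
             (∀ k, (∀ l, (∑ j, H l j * x i j) + B l ≤ (∑ j, H k j * x i j) + B k) → q i ≤ k)}
      ≤ (2 ^ (d + 1) * N.choose d) ^ (n * (n - 1) / 2) := by
  obtain ⟨N, rfl⟩ : ∃ N', N = N' + 1 := ⟨N - 1, by omega⟩
  have hC : (closedSignPatterns fun i => affineEval (x i)).ncard ≤
      2 ^ (d + 1) * (N + 1).choose d :=
    calc _ ≤ 2 * ∑ j ∈ range (d + 1), N.choose j := ncard_closedSignPatterns_affineEval_le x
      _ ≤ 2 * (2 ^ d * (N + 1).choose d) :=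
          Nat.mul_le_mul_left 2 (sum_range_choose_le_two_pow_mul_choose hdN.le)
      _ = 2 ^ (d + 1) * (N + 1).choose d := by ring
  -- the set on the left is `linearClassifierLabelings x n` with `affineEval` and `IsLeast` unfolded
  exact (ncard_linearClassifierLabelings_le x n).trans (Nat.pow_le_pow_left hC _)

/-- The number of labelings of N > d points in general position realizable by
n-class linear classifiers (argmax rule, smallest-index tie-breaking) is at most
(2^(d+1) C(N,d))^(n(n-1)/2). -/
theorem stmt6 (d N n : ℕ) (hdN : d < N) (hn : 2 ≤ n)
    (x : Fin N → (Fin d → ℝ))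
    (hgen : ∀ (h : Fin d → ℝ) (b : ℝ), h ≠ 0 →
      Set.ncard {i : Fin N | (∑ j, h j * x i j) + b = 0} ≤ d) :
    Set.ncard {q : Fin N → Fin n | ∃ (H : Fin n → Fin d → ℝ) (B : Fin n → ℝ),
        ∀ i, (∀ k, (∑ j, H k j * x i j) + B k ≤ (∑ j, H (q i) j * x i j) + B (q i)) ∧
             (∀ k, (∀ l, (∑ j, H l j * x i j) + B l ≤ (∑ j, H k j * x i j) + B k) → q i ≤ k)}
      ≤ (2 ^ (d + 1) * N.choose d) ^ (n * (n - 1) / 2) :=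
  stmt6_general d N n hdN x
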